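/- The mean aggregator is not injective on finite multisets of real numbers: there exist two distinct multisets S₁ ≠ S₂ of reals with mean(S₁) = mean(S₂); in contrast, for multisets of elements from a countable set embedded as distinct powers (e.g., elements mapped to 4^{-k} for distinct indices k), the sum aggregator is injective on multisets of bounded size. -/
import Mathlib

/-- Uniqueness of base-4 digit expansions with digits ≤ 3. -/
lemma dig_unique : ∀ (m : ℕ) (a b : ℕ → ℕ), (∀ k, a k ≤ 3) → (∀ k, b k ≤ 3) →
    (∑ k ∈ Finset.range m, a k * 4 ^ k = ∑ k ∈ Finset.range m, b k * 4 ^ k) →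
    ∀ k < m, a k = b k := by
  intro m
  induction m with
  | zero => intro a b _ _ _ k hk; omega
  | succ n ih =>
    intro a b ha hb hsum k hk
    rw [Finset.sum_range_succ', Finset.sum_range_succ'] at hsum
    have h1 : ∀ (c : ℕ → ℕ), ∑ i ∈ Finset.range n, c (i + 1) * 4 ^ (i + 1)
        = (∑ i ∈ Finset.range n, c (i + 1) * 4 ^ i) * 4 := by
      intro c
      rw [Finset.sum_mul]
      exact Finset.sum_congr rfl (fun i _ => by ring)
    rw [h1 a, h1 b] at hsum
    simp only [pow_zero, mul_one] at hsum
    have ha0 := ha 0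
    have hb0 := hb 0
    have key : a 0 = b 0 ∧ (∑ i ∈ Finset.range n, a (i + 1) * 4 ^ i)
        = ∑ i ∈ Finset.range n, b (i + 1) * 4 ^ i := by omega
    rcases k with _ | j
    · exact key.1
    · exact ih (fun i => a (i + 1)) (fun i => b (i + 1)) (fun i => ha _) (fun i => hb _)
        key.2 j (by omega)

lemma sum_eq_range (S : Multiset ℕ) (N : ℕ) (hN : ∀ k ∈ S, k < N) :
    (S.map (fun k => ((4 : ℝ) ^ k)⁻¹)).sum
      = ∑ k ∈ Finset.range N, (S.count k : ℝ) * ((4 : ℝ) ^ k)⁻¹ := by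
  rw [Finset.sum_multiset_map_count]
  rw [← Finset.sum_subset (s₁ := S.toFinset) (s₂ := Finset.range N)
      (by intro x hx; exact Finset.mem_range.mpr (hN x (Multiset.mem_toFinset.mp hx)))
      (by intro x _ hx
          have : S.count x = 0 := Multiset.count_eq_zero.mpr
            (fun h => hx (Multiset.mem_toFinset.mpr h))
          simp [this])]
  exact Finset.sum_congr rfl (fun x _ => by simp [nsmul_eq_mul])

theorem mean_not_injective_sum_injective :
    (∃ S₁ S₂ : Multiset ℝ, S₁ ≠ S₂ ∧ S₁ ≠ 0 ∧ S₂ ≠ 0 ∧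
      S₁.sum / (S₁.card : ℝ) = S₂.sum / (S₂.card : ℝ)) ∧
    ∀ S₁ S₂ : Multiset ℕ, (∀ k, S₁.count k ≤ 3) → (∀ k, S₂.count k ≤ 3) →
      (S₁.map (fun k => ((4 : ℝ) ^ k)⁻¹)).sum = (S₂.map (fun k => ((4 : ℝ) ^ k)⁻¹)).sum →
      S₁ = S₂ := by
  constructor
  · refine ⟨{0}, {0, 0}, ?_, by simp, by simp, by simp⟩
    intro h
    have := congrArg Multiset.card h
    simp at this
  · intro S₁ S₂ h1 h2 hsum
    set N : ℕ := max S₁.sup S₂.sup + 1 with hNdef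
    have hN1 : ∀ k ∈ S₁, k < N := fun k hk =>
      lt_of_le_of_lt (le_trans (Multiset.le_sup hk) (le_max_left _ _)) (Nat.lt_succ_self _)
    have hN2 : ∀ k ∈ S₂, k < N := fun k hk =>
      lt_of_le_of_lt (le_trans (Multiset.le_sup hk) (le_max_right _ _)) (Nat.lt_succ_self _)
    rw [sum_eq_range S₁ N hN1, sum_eq_range S₂ N hN2] at hsum
    -- multiply by 4^(N-1)
    have hmul : ∀ (S : Multiset ℕ),
        (∑ k ∈ Finset.range N, (S.count k : ℝ) * ((4 : ℝ) ^ k)⁻¹) * (4 : ℝ) ^ (N - 1)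
          = ((∑ k ∈ Finset.range N, S.count k * 4 ^ (N - 1 - k) : ℕ) : ℝ) := by
      intro S
      rw [Finset.sum_mul]
      push_cast
      refine Finset.sum_congr rfl (fun k hk => ?_)
      have hk' : k < N := Finset.mem_range.mp hk
      have hpow : (4 : ℝ) ^ (N - 1) = 4 ^ k * 4 ^ (N - 1 - k) := by
        rw [← pow_add]
        congr 1
        omega
      rw [mul_assoc, hpow, ← mul_assoc ((4 : ℝ) ^ k)⁻¹, inv_mul_cancel₀ (by positivity), one_mul]
    have hnat : ∑ k ∈ Finset.range N, S₁.count k * 4 ^ (N - 1 - k)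
        = ∑ k ∈ Finset.range N, S₂.count k * 4 ^ (N - 1 - k) := by
      have := congrArg (· * (4 : ℝ) ^ (N - 1)) hsum
      simp only [hmul] at this
      exact_mod_cast this
    -- reflect to apply digit uniqueness
    have hrefl : ∀ (S : Multiset ℕ),
        ∑ k ∈ Finset.range N, S.count (N - 1 - k) * 4 ^ k
          = ∑ k ∈ Finset.range N, S.count k * 4 ^ (N - 1 - k) := by
      intro S
      rw [← Finset.sum_range_reflect (fun k => S.count k * 4 ^ (N - 1 - k)) N]
      refine Finset.sum_congr rfl (fun k hk => ?_)
      have hk' : k < N := Finset.mem_range.mp hk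
      congr 2
      omega
    have hdig := dig_unique N (fun k => S₁.count (N - 1 - k)) (fun k => S₂.count (N - 1 - k))
      (fun k => h1 _) (fun k => h2 _)
      (by rw [hrefl, hrefl]; exact hnat)
    ext i
    by_cases hi : i < N
    · have := hdig (N - 1 - i) (by omega)
      have e : N - 1 - (N - 1 - i) = i := by omega
      rwa [e] at this
    · have e1 : S₁.count i = 0 := Multiset.count_eq_zero.mpr (fun h => hi (hN1 i h))
      have e2 : S₂.count i = 0 := Multiset.count_eq_zero.mpr (fun h => hi (hN2 i h))
      rw [e1, e2]
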